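/- For every integer k > 2, the class REG/n(2) of languages recognized by a deterministic finite automaton with a binary advice track is strictly contained in the class REG/n(k) of languages recognized by a deterministic finite automaton with a k-ary advice track: REG/n(2) ⊆ REG/n(k), and there exists a language over the k-symbol alphabet that is in REG/n(k) but not in REG/n(2). -/

import Mathlib

/-!
A binary advice track is a `k`-ary one that only uses two symbols; the automaton reads the
other symbols as one of those two. For the separation, fix a `t`-track automaton and a length
`n`: under each advice string it accepts a set of length-`n` words, so at most `t ^ n < k ^ n`
words are the unique accepted word under some advice. Diagonalizing over the countably many
`t`-track automata yields a language with exactly one word per length that none of them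
recognizes, while a `k`-track automaton recognizes it by receiving that word as advice and
checking that the input agrees with it.
-/

/-- The marked word: the i-th symbol of `w` becomes `(w_i, true)` if `i ∈ S`,
and `(w_i, false)` otherwise. -/
def markWord {α : Type*} (w : List α) (S : Finset ℕ) : List (α × Bool) :=
  (List.zip (List.range w.length) w).map (fun p => (p.2, decide (p.1 ∈ S)))

/-- `L` is recognized by a deterministic finite automaton with at most `a n`
inkdots of advice on inputs of length `n`. -/
def RecognizedWithInkdots {α : Type*} (L : Set (List α)) (a : ℕ → ℕ) : Prop :=
  ∃ (σ : Type) (_ : Fintype σ) (M : DFA (α × Bool) σ) (h : ℕ → Finset ℕ),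
    (∀ n, ∀ i ∈ h n, i < n) ∧
    (∀ n, (h n).card ≤ a n) ∧
    (∀ w : List α, w ∈ L ↔ markWord w (h w.length) ∈ M.accepts)
/-- `L` is recognized by a deterministic finite automaton with a `t`-ary advice track. -/
def RecognizedWithAdviceTrack {α : Type*} (L : Set (List α)) (t : ℕ) : Prop :=
  ∃ (σ : Type) (_ : Fintype σ) (M : DFA (α × Fin t) σ) (h : (n : ℕ) → Fin n → Fin t),
    ∀ w : List α, w ∈ L ↔
      (List.ofFn (fun i : Fin w.length => (w.get i, h w.length i))) ∈ M.accepts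

theorem Set.exists_forall_ne_singleton_of_card_lt {A B : Type*} [Fintype A] [Fintype B]
    (F : B → Set A) (h : Fintype.card B < Fintype.card A) : ∃ a, ∀ b, F b ≠ {a} := by
  by_contra! hF
  choose g hg using hF
  have hg_inj : Function.Injective g := fun a a' e => by
    simpa using (hg a).symm.trans ((congrArg F e).trans (hg a'))
  exact (Fintype.card_le_of_injective g hg_inj).not_gt h

namespace DFA

variable {α β σ : Type*}

def acceptsWithAdvice (M : DFA (α × β) σ) {n : ℕ} (v : Fin n → β) : Set (Fin n → α) :=
  {u | List.ofFn (fun i => (u i, v i)) ∈ M.accepts}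

theorem acceptsWithAdvice_comap {γ : Type*} (M : DFA (α × β) σ) (g : γ → β) {n : ℕ}
    (v : Fin n → γ) :
    (M.comap (Prod.map id g)).acceptsWithAdvice v = M.acceptsWithAdvice (g ∘ v) := by
  ext u
  change _ ∈ (M.comap _).accepts ↔ _ ∈ M.accepts
  rw [mem_accepts, mem_accepts, eval_comap, List.map_ofFn]
  rfl

theorem acceptsWithAdvice_reindex {σ' : Type*} (M : DFA (α × β) σ) (e : σ ≃ σ') {n : ℕ}
    (v : Fin n → β) : (reindex e M).acceptsWithAdvice v = M.acceptsWithAdvice v := by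
  simp [acceptsWithAdvice, accepts_reindex]

def trackEq (α : Type*) [DecidableEq α] : DFA (α × α) Bool where
  step s p := s && decide (p.1 = p.2)
  start := true
  accept := {true}

theorem mem_accepts_trackEq [DecidableEq α] {l : List (α × α)} :
    l ∈ (trackEq α).accepts ↔ ∀ p ∈ l, p.1 = p.2 := by
  have evalFrom_eq : ∀ (s : Bool) (l : List (α × α)),
      (trackEq α).evalFrom s l = (s && l.all fun p => p.1 = p.2) := by
    intro s l
    induction l generalizing s with
    | nil => simp [evalFrom_nil]
    | cons p l ih =>
      rw [evalFrom_cons, ih]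
      simp [trackEq, Bool.and_assoc]
  rw [mem_accepts, eval, evalFrom_eq]
  simp [trackEq, List.all_eq_true]

theorem acceptsWithAdvice_trackEq [DecidableEq α] {n : ℕ} (v : Fin n → α) :
    (trackEq α).acceptsWithAdvice v = {v} := by
  ext u
  simp [acceptsWithAdvice, mem_accepts_trackEq, funext_iff]

theorem exists_forall_acceptsWithAdvice_ne_singleton [Fintype α] [Fintype β]
    (hβα : Fintype.card β < Fintype.card α) {n : ℕ} (hn : n ≠ 0) (M : DFA (α × β) σ) :
    ∃ u : Fin n → α, ∀ v : Fin n → β, M.acceptsWithAdvice v ≠ {u} :=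
  Set.exists_forall_ne_singleton_of_card_lt _ <| by
    simpa using Nat.pow_lt_pow_left hβα hn

end DFA

theorem List.ofFn_mem_range_ofFn_iff {α : Type*} (x : (n : ℕ) → Fin n → α) {n : ℕ}
    (u : Fin n → α) : List.ofFn u ∈ Set.range (fun m => List.ofFn (x m)) ↔ u = x n := by
  simp [List.ofFn_inj', Sigma.ext_iff, eq_comm]

theorem recognizedWithAdviceTrack_iff {α : Type*} {L : Set (List α)} {t : ℕ} :
    RecognizedWithAdviceTrack L t ↔ ∃ (σ : Type) (_ : Fintype σ) (M : DFA (α × Fin t) σ)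
      (h : (n : ℕ) → Fin n → Fin t),
      ∀ n (u : Fin n → α), List.ofFn u ∈ L ↔ u ∈ M.acceptsWithAdvice (h n) := by
  refine exists_congr fun σ => exists_congr fun _ => exists_congr fun M => exists_congr fun h =>
    ⟨fun hM n u => ?_, fun hM w => by simpa [DFA.acceptsWithAdvice] using hM w.length w.get⟩
  have track_cast : ∀ (w : List α) (hw : w.length = n),
      List.ofFn (fun i : Fin w.length => (w.get i, h w.length i)) =
        List.ofFn (fun i : Fin n => (w.get (i.cast hw.symm), h n i)) := by
    rintro w rfl
    rfl
  rw [hM, track_cast _ List.length_ofFn]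
  simp [DFA.acceptsWithAdvice]

instance DFA.instFinite {α σ : Type*} [Finite α] [Finite σ] : Finite (DFA α σ) :=
  Finite.of_injective (fun M : DFA α σ => (M.step, M.start, M.accept)) fun M M' h => by
    cases M; cases M'; simp_all

theorem RecognizedWithAdviceTrack.mono {α : Type*} {L : Set (List α)} {t t' : ℕ}
    (hL : RecognizedWithAdviceTrack L t) (htt' : t ≤ t') : RecognizedWithAdviceTrack L t' := by
  obtain ⟨σ, _, M, h, hM⟩ := recognizedWithAdviceTrack_iff.mp hL
  have : Nonempty (Fin t) := ⟨h 1 0⟩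
  refine recognizedWithAdviceTrack_iff.mpr ⟨σ, ‹_›, M.comap (Prod.map id (Function.invFun
    (Fin.castLE htt'))), fun n => Fin.castLE htt' ∘ h n, fun n u => ?_⟩
  rw [hM, DFA.acceptsWithAdvice_comap, ← Function.comp_assoc,
    Function.invFun_comp (Fin.castLE_injective htt'), Function.id_comp]

theorem recognizedWithAdviceTrack_range_ofFn {k : ℕ} (x : (n : ℕ) → Fin n → Fin k) :
    RecognizedWithAdviceTrack (Set.range fun n => List.ofFn (x n)) k :=
  recognizedWithAdviceTrack_iff.mpr ⟨Bool, inferInstance, DFA.trackEq (Fin k), x, fun n u => by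
    rw [List.ofFn_mem_range_ofFn_iff, DFA.acceptsWithAdvice_trackEq]
    rfl⟩

theorem RecognizedWithAdviceTrack.exists_acceptsWithAdvice_eq_singleton {α : Type*} {t : ℕ}
    {x : (n : ℕ) → Fin n → α}
    (hL : RecognizedWithAdviceTrack (Set.range fun n => List.ofFn (x n)) t) :
    ∃ (m : ℕ) (M : DFA (α × Fin t) (Fin m)) (h : (n : ℕ) → Fin n → Fin t),
      ∀ n, M.acceptsWithAdvice (h n) = {x n} := by
  obtain ⟨σ, _, M, h, hM⟩ := recognizedWithAdviceTrack_iff.mp hL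
  refine ⟨_, DFA.reindex (Fintype.equivFin σ) M, h, fun n => ?_⟩
  ext u
  rw [DFA.acceptsWithAdvice_reindex, ← hM, List.ofFn_mem_range_ofFn_iff]
  rfl

/-- Diagonalization: list all `t`-track automata, and at each length `n > 0` keep one word
that the `(n - 1)`-st automaton singles out under no advice string. -/
theorem exists_recognizedWithAdviceTrack_not_recognizedWithAdviceTrack {k t : ℕ} (htk : t < k) :
    ∃ L : Set (List (Fin k)), RecognizedWithAdviceTrack L k ∧ ¬ RecognizedWithAdviceTrack L t := by
  have : Nonempty (Σ m : ℕ, DFA (Fin k × Fin t) (Fin m)) := ⟨⟨1, default⟩⟩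
  obtain ⟨machine, hmachine⟩ := exists_surjective_nat (Σ m : ℕ, DFA (Fin k × Fin t) (Fin m))
  have : ∀ n, ∃ u : Fin n → Fin k, n ≠ 0 → ∀ v, (machine (n - 1)).2.acceptsWithAdvice v ≠ {u} := by
    intro n
    rcases eq_or_ne n 0 with rfl | hn
    · exact ⟨Fin.elim0, fun h => (h rfl).elim⟩
    · obtain ⟨u, hu⟩ := DFA.exists_forall_acceptsWithAdvice_ne_singleton (by simpa using htk) hn
        (machine (n - 1)).2
      exact ⟨u, fun _ => hu⟩
  choose x hx using this
  refine ⟨_, recognizedWithAdviceTrack_range_ofFn x, fun hL => ?_⟩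
  obtain ⟨m, M, h, hM⟩ := hL.exists_acceptsWithAdvice_eq_singleton
  obtain ⟨j, hj⟩ := hmachine ⟨m, M⟩
  exact hx (j + 1) j.succ_ne_zero (h (j + 1)) (by rw [Nat.add_sub_cancel, hj, hM])

/-- for every `k > 2`, `REG/n(2) ⊊ REG/n(k)` over the `k`-symbol alphabet. -/
theorem binary_track_strictly_weaker (k : ℕ) (hk : 2 < k) :
    (∀ L : Set (List (Fin k)),
        RecognizedWithAdviceTrack L 2 → RecognizedWithAdviceTrack L k) ∧
    ∃ L : Set (List (Fin k)),
      RecognizedWithAdviceTrack L k ∧ ¬ RecognizedWithAdviceTrack L 2 :=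
  ⟨fun _ hL => hL.mono hk.le, exists_recognizedWithAdviceTrack_not_recognizedWithAdviceTrack hk⟩
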